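/- arXiv:2512.12197 — 2 statements merged into one kernel-verified Lean document; each statement's English description precedes it below -/
import Mathlib

section
/- (2-Route 2-Bus system: no type P-T and no type P-P Braess' paradox.) For α₁, α₂, ρ, f̄ > 0 define S := α₁ + α₂ + 2ρ², x₁ := (α₂ + ρ² − 2ρf̄)/S, x₂ := 1 − x₁, λ₁ := ρx₁ + f̄, λ₂ := ρx₂ − f̄, Φ_T := α₁x₁² + α₂x₂², and Φ_P := (1/2)(λ₁² + λ₂²). Assume x₁ > 0 and the congestion condition ρ(x₂ − x₁) > 2f̄. Then both partial derivatives with respect to f̄ are strictly negative: ∂Φ_T/∂f̄ < 0 and ∂Φ_P/∂f̄ < 0. Hence increasing the power line capacity strictly decreases both the transportation and the power system social costs: type P-T and type P-P Braess' paradoxes never occur for the 2-Route 2-Bus coupled network. -/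
/-!
The equilibrium share `x₁(f̄)` is affine in `f̄` with slope `-2ρ/S < 0`. Differentiating,
`Φ_T' = 2 x₁' (α₁x₁ - α₂x₂)` and `Φ_P' = (1 + ρ x₁') (λ₁ - λ₂)` with `1 + ρ x₁' = (α₁ + α₂)/S > 0`.
Congestion says exactly `λ₁ < λ₂`, and the user equilibrium `α₁x₁ + ρλ₁ = α₂x₂ + ρλ₂` turns this
into `α₁x₁ - α₂x₂ = ρ (λ₂ - λ₁) > 0`, so both derivatives are negative.
-/

noncomputable def equilibriumShare (α₁ α₂ ρ b : ℝ) : ℝ :=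
  (α₂ + ρ ^ 2 - 2 * ρ * b) / (α₁ + α₂ + 2 * ρ ^ 2)

theorem hasDerivAt_equilibriumShare (α₁ α₂ ρ b : ℝ) :
    HasDerivAt (equilibriumShare α₁ α₂ ρ) (-(2 * ρ) / (α₁ + α₂ + 2 * ρ ^ 2)) b := by
  have h : HasDerivAt (fun b : ℝ => α₂ + ρ ^ 2 - 2 * ρ * b) (-(2 * ρ)) b := by
    simpa using ((hasDerivAt_id b).const_mul (2 * ρ)).const_sub (α₂ + ρ ^ 2)
  exact h.div_const _

theorem equilibriumShare_isUserEquilibrium {α₁ α₂ ρ : ℝ} (hS : α₁ + α₂ + 2 * ρ ^ 2 ≠ 0) (b : ℝ) :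
    α₁ * equilibriumShare α₁ α₂ ρ b + ρ * (ρ * equilibriumShare α₁ α₂ ρ b + b) =
      α₂ * (1 - equilibriumShare α₁ α₂ ρ b) + ρ * (ρ * (1 - equilibriumShare α₁ α₂ ρ b) - b) := by
  have hx : equilibriumShare α₁ α₂ ρ b * (α₁ + α₂ + 2 * ρ ^ 2) = α₂ + ρ ^ 2 - 2 * ρ * b :=
    div_mul_cancel₀ _ hS
  linear_combination hx

theorem hasDerivAt_transportCost {u : ℝ → ℝ} {u' b : ℝ} (α₁ α₂ : ℝ) (hu : HasDerivAt u u' b) :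
    HasDerivAt (fun b => α₁ * u b ^ 2 + α₂ * (1 - u b) ^ 2)
      (2 * u' * (α₁ * u b - α₂ * (1 - u b))) b :=
  (((hu.pow 2).const_mul α₁).add (((hu.const_sub 1).pow 2).const_mul α₂)).congr_deriv
    (by push_cast; ring)

theorem hasDerivAt_powerCost {u : ℝ → ℝ} {u' b : ℝ} (ρ : ℝ) (hu : HasDerivAt u u' b) :
    HasDerivAt (fun b => 1 / 2 * ((ρ * u b + b) ^ 2 + (ρ * (1 - u b) - b) ^ 2))
      ((ρ * u' + 1) * ((ρ * u b + b) - (ρ * (1 - u b) - b))) b := by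
  have h₁ : HasDerivAt (fun b => ρ * u b + b) (ρ * u' + 1) b :=
    (hu.const_mul ρ).add (hasDerivAt_id' b)
  have h₂ : HasDerivAt (fun b => ρ * (1 - u b) - b) (ρ * -u' - 1) b :=
    ((hu.const_sub 1).const_mul ρ).sub (hasDerivAt_id' b)
  exact (((h₁.pow 2).add (h₂.pow 2)).const_mul (1 / 2 : ℝ)).congr_deriv (by push_cast; ring)

theorem two_route_two_bus_no_PT_no_PP_general
    (α₁ α₂ ρ fb : ℝ) (h1 : 0 < α₁) (h2 : 0 < α₂) (hρ : 0 < ρ)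
    (S x₁ x₂ : ℝ)
    (hS : S = α₁ + α₂ + 2 * ρ ^ 2)
    (hx₁ : x₁ = (α₂ + ρ ^ 2 - 2 * ρ * fb) / S)
    (hx₂ : x₂ = 1 - x₁)
    (hcong : 2 * fb < ρ * (x₂ - x₁)) :
    ∃ D₁ D₂ : ℝ,
      HasDerivAt
        (fun b : ℝ =>
          α₁ * ((α₂ + ρ ^ 2 - 2 * ρ * b) / (α₁ + α₂ + 2 * ρ ^ 2)) ^ 2 +
            α₂ * (1 - (α₂ + ρ ^ 2 - 2 * ρ * b) / (α₁ + α₂ + 2 * ρ ^ 2)) ^ 2)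
        D₁ fb ∧ D₁ < 0 ∧
      HasDerivAt
        (fun b : ℝ =>
          (1 / 2) *
            ((ρ * ((α₂ + ρ ^ 2 - 2 * ρ * b) / (α₁ + α₂ + 2 * ρ ^ 2)) + b) ^ 2 +
              (ρ * (1 - (α₂ + ρ ^ 2 - 2 * ρ * b) / (α₁ + α₂ + 2 * ρ ^ 2)) - b) ^ 2))
        D₂ fb ∧ D₂ < 0 := by
  subst hS hx₂
  change x₁ = equilibriumShare α₁ α₂ ρ fb at hx₁
  subst hx₁
  set x := equilibriumShare α₁ α₂ ρ fb
  set S := α₁ + α₂ + 2 * ρ ^ 2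
  have hSpos : 0 < S := by positivity
  have hslope : 2 * (-(2 * ρ) / S) < 0 :=
    mul_neg_of_pos_of_neg two_pos (div_neg_of_neg_of_pos (by linarith) hSpos)
  have hprice_slope : 0 < ρ * (-(2 * ρ) / S) + 1 := by
    rw [mul_div_assoc', div_add_one hSpos.ne']
    exact div_pos (by nlinarith) hSpos
  have hprice_gap : ρ * x + fb - (ρ * (1 - x) - fb) < 0 := by linarith
  have hcost_gap : α₁ * x - α₂ * (1 - x) = ρ * ((ρ * (1 - x) - fb) - (ρ * x + fb)) := by
    linear_combination equilibriumShare_isUserEquilibrium hSpos.ne' fb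
  have hu := hasDerivAt_equilibriumShare α₁ α₂ ρ fb
  exact ⟨_, _, hasDerivAt_transportCost α₁ α₂ hu,
    mul_neg_of_neg_of_pos hslope (hcost_gap ▸ mul_pos hρ (by linarith)),
    hasDerivAt_powerCost ρ hu, mul_neg_of_pos_of_neg hprice_slope hprice_gap⟩

/-- 2-Route 2-Bus coupled system with congested power line: the partial derivatives of
both the transportation social cost `Φ_T` and the power system social cost `Φ_P` with
respect to the line capacity `f̄` are strictly negative, so neither a type P-T nor a
type P-P Braess' paradox ever occurs. -/
theorem two_route_two_bus_no_PT_no_PP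
    (α₁ α₂ ρ fb : ℝ) (h1 : 0 < α₁) (h2 : 0 < α₂) (hρ : 0 < ρ) (hf : 0 < fb)
    (S x₁ x₂ l₁ l₂ : ℝ)
    (hS : S = α₁ + α₂ + 2 * ρ ^ 2)
    (hx₁ : x₁ = (α₂ + ρ ^ 2 - 2 * ρ * fb) / S)
    (hx₂ : x₂ = 1 - x₁)
    (hl₁ : l₁ = ρ * x₁ + fb) (hl₂ : l₂ = ρ * x₂ - fb)
    (hx₁pos : 0 < x₁) (hcong : 2 * fb < ρ * (x₂ - x₁)) :
    ∃ D₁ D₂ : ℝ,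
      HasDerivAt
        (fun b : ℝ =>
          α₁ * ((α₂ + ρ ^ 2 - 2 * ρ * b) / (α₁ + α₂ + 2 * ρ ^ 2)) ^ 2 +
            α₂ * (1 - (α₂ + ρ ^ 2 - 2 * ρ * b) / (α₁ + α₂ + 2 * ρ ^ 2)) ^ 2)
        D₁ fb ∧ D₁ < 0 ∧
      HasDerivAt
        (fun b : ℝ =>
          (1 / 2) *
            ((ρ * ((α₂ + ρ ^ 2 - 2 * ρ * b) / (α₁ + α₂ + 2 * ρ ^ 2)) + b) ^ 2 +
              (ρ * (1 - (α₂ + ρ ^ 2 - 2 * ρ * b) / (α₁ + α₂ + 2 * ρ ^ 2)) - b) ^ 2))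
        D₂ fb ∧ D₂ < 0 :=
  two_route_two_bus_no_PT_no_PP_general α₁ α₂ ρ fb h1 h2 hρ S x₁ x₂ hS hx₁ hx₂ hcong
end

section
/- (Necessary and sufficient conditions for power-expansion Braess' paradox: derivative formulas in the line capacities.) Let K ≥ 1, let ᾱ ∈ ℝ^{K×K} be symmetric, Q̂ ∈ ℝ^K with all entries positive, ρ > 0, μ̂ ∈ ℝ^K, β̂ ∈ ℝ^K, Ŝ ∈ ℝ^{K×m_P}, and suppose Γ := ᾱ + ρ²·diag(Q̂) is invertible with D := 1ᵀΓ⁻¹1 ≠ 0; set B̂_ul⁻¹ := Γ⁻¹ − D⁻¹Γ⁻¹11ᵀΓ⁻¹. For f̄ ∈ ℝ^{m_P} let f̂(f̄) := Ŝ·f̄, x̂(f̄) := −B̂_ul⁻¹·(β̂ + ρ·diag(Q̂)·f̂(f̄) + ρ·μ̂) + D⁻¹·Γ⁻¹1, λ̂(f̄) := diag(Q̂)·(ρ·x̂(f̄) + f̂(f̄)) + μ̂, Φ_T(f̄) := x̂(f̄)ᵀᾱ·x̂(f̄) + β̂ᵀx̂(f̄), and Φ_P(f̄) := ∑_k [ (1/2)·Q̂_k·(ρ·x̂_k(f̄)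 + f̂_k(f̄))² + μ̂_k·(ρ·x̂_k(f̄) + f̂_k(f̄)) ]. Then for every line index ℓ, ∂Φ_T/∂f̄_ℓ = −ρ·(2·ᾱ·x̂(f̄) + β̂)ᵀ·B̂_ul⁻¹·diag(Q̂)·Ŝ·e_ℓ and ∂Φ_P/∂f̄_ℓ = λ̂(f̄)ᵀ·(I − ρ²·B̂_ul⁻¹·diag(Q̂))·Ŝ·e_ℓ, where e_ℓ is the ℓ-th standard basis vector. Consequently, a type P-T (resp. P-P) Braess' paradox occurs if and only if the first (resp. second) expression is strictly positive for some ℓ. -/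
open Matrix

/-! x̂ is affine in f̄ with velocity `-ρ • B̂_ul⁻¹ diag(Q̂) Ŝ e_ℓ` along the `ℓ`-th coordinate
line, so both derivatives follow from the product rule for the dot product; symmetry of ᾱ merges
the two terms of `∂Φ_T` into `2ᾱx̂`. The Braess characterisations hold because derivatives are
unique. -/

section
variable {ι κ : Type*} [Fintype ι] {x y : ℝ → ι → ℝ} {x' y' : ι → ℝ} {t : ℝ}

theorem HasDerivAt.dotProduct (hx : HasDerivAt x x' t) (hy : HasDerivAt y y' t) :
    HasDerivAt (fun s => x s ⬝ᵥ y s) (x' ⬝ᵥ y t + x t ⬝ᵥ y') t := by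
  rw [_root_.dotProduct, _root_.dotProduct, ← Finset.sum_add_distrib]
  exact HasDerivAt.fun_sum fun i _ => (hasDerivAt_pi.1 hx i).mul (hasDerivAt_pi.1 hy i)

theorem HasDerivAt.const_mulVec (A : Matrix κ ι ℝ) (hx : HasDerivAt x x' t) :
    HasDerivAt (fun s => A *ᵥ x s) (A *ᵥ x') t :=
  hasDerivAt_pi.2 fun k => by
    simpa [mulVec] using (hasDerivAt_const t (A k)).dotProduct hx

theorem HasDerivAt.dotProduct_mulVec_self_add_dotProduct {A : Matrix ι ι ℝ} (hA : A.IsSymm)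
    (b : ι → ℝ) (hx : HasDerivAt x x' t) :
    HasDerivAt (fun s => x s ⬝ᵥ A *ᵥ x s + b ⬝ᵥ x s) (((2 : ℝ) • A *ᵥ x t + b) ⬝ᵥ x') t := by
  refine ((hx.dotProduct (hx.const_mulVec A)).add
    ((hasDerivAt_const t b).dotProduct hx)).congr_deriv ?_
  rw [dotProduct_mulVec (x t), ← mulVec_transpose, hA, dotProduct_comm x']
  simp only [add_dotProduct, smul_dotProduct, zero_dotProduct, smul_eq_mul]
  ring

theorem HasDerivAt.sum_half_mul_sq_add_mul [DecidableEq ι] (Q μ : ι → ℝ)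
    (hy : HasDerivAt y y' t) :
    HasDerivAt (fun s => ∑ k, ((1 / 2) * Q k * y s k ^ 2 + μ k * y s k))
      ((diagonal Q *ᵥ y t + μ) ⬝ᵥ y') t := by
  rw [_root_.dotProduct]
  refine HasDerivAt.fun_sum fun k _ => ?_
  have hk := hasDerivAt_pi.1 hy k
  refine (((hk.pow 2).const_mul ((1 / 2) * Q k)).add (hk.const_mul (μ k))).congr_deriv ?_
  simp only [mulVec_diagonal, Pi.add_apply]
  push_cast
  ring

theorem HasDerivAt.exists_pos_iff {f : ℝ → ℝ} {f' : ℝ} (h : HasDerivAt f f' t) :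
    (∃ D, HasDerivAt f D t ∧ 0 < D) ↔ 0 < f' :=
  ⟨fun ⟨_, hD, hpos⟩ => hD.unique h ▸ hpos, fun hpos => ⟨f', h, hpos⟩⟩

end

theorem PBP_capacity_derivatives_general {K mP : ℕ}
    (abar : Matrix (Fin K) (Fin K) ℝ) (habar : abarᵀ = abar)
    (Qhat : Fin K → ℝ)
    (ρ : ℝ)
    (muhat bhat : Fin K → ℝ) (Shat : Matrix (Fin K) (Fin mP) ℝ) :
    let Γ : Matrix (Fin K) (Fin K) ℝ := abar + ρ ^ 2 • Matrix.diagonal Qhat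
    let D : ℝ := (1 : Fin K → ℝ) ⬝ᵥ Γ⁻¹.mulVec 1
    let onesKK : Matrix (Fin K) (Fin K) ℝ := Matrix.of fun _ _ => (1 : ℝ)
    let Bul : Matrix (Fin K) (Fin K) ℝ := Γ⁻¹ - D⁻¹ • (Γ⁻¹ * onesKK * Γ⁻¹)
    let fhat : (Fin mP → ℝ) → Fin K → ℝ := fun fb => Shat.mulVec fb
    let xhat : (Fin mP → ℝ) → Fin K → ℝ := fun fb =>
      -(Bul.mulVec (bhat + ρ • (Matrix.diagonal Qhat).mulVec (fhat fb) + ρ • muhat)) +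
        D⁻¹ • Γ⁻¹.mulVec 1
    let lamhat : (Fin mP → ℝ) → Fin K → ℝ := fun fb =>
      (Matrix.diagonal Qhat).mulVec (ρ • xhat fb + fhat fb) + muhat
    let ΦT : (Fin mP → ℝ) → ℝ := fun fb =>
      xhat fb ⬝ᵥ abar.mulVec (xhat fb) + bhat ⬝ᵥ xhat fb
    let ΦP : (Fin mP → ℝ) → ℝ := fun fb =>
      ∑ k, ((1 / 2) * Qhat k * (ρ * xhat fb k + fhat fb k) ^ 2 +
        muhat k * (ρ * xhat fb k + fhat fb k))
    let dT : (Fin mP → ℝ) → Fin mP → ℝ := fun fb ℓ =>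
      -(ρ * (((2 : ℝ) • abar.mulVec (xhat fb) + bhat) ⬝ᵥ
        (Bul * Matrix.diagonal Qhat * Shat).mulVec (Pi.single ℓ 1)))
    let dP : (Fin mP → ℝ) → Fin mP → ℝ := fun fb ℓ =>
      lamhat fb ⬝ᵥ
        (((1 : Matrix (Fin K) (Fin K) ℝ) - ρ ^ 2 • (Bul * Matrix.diagonal Qhat)) *
          Shat).mulVec (Pi.single ℓ 1)
    ∀ fb : Fin mP → ℝ,
      (∀ ℓ : Fin mP,
        HasDerivAt (fun t : ℝ => ΦT (Function.update fb ℓ t)) (dT fb ℓ) (fb ℓ) ∧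
        HasDerivAt (fun t : ℝ => ΦP (Function.update fb ℓ t)) (dP fb ℓ) (fb ℓ)) ∧
      ((∃ (ℓ : Fin mP) (Dv : ℝ),
          HasDerivAt (fun t : ℝ => ΦT (Function.update fb ℓ t)) Dv (fb ℓ) ∧ 0 < Dv) ↔
        ∃ ℓ : Fin mP, 0 < dT fb ℓ) ∧
      ((∃ (ℓ : Fin mP) (Dv : ℝ),
          HasDerivAt (fun t : ℝ => ΦP (Function.update fb ℓ t)) Dv (fb ℓ) ∧ 0 < Dv) ↔
        ∃ ℓ : Fin mP, 0 < dP fb ℓ) := by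
  intro Γ D onesKK Bul fhat xhat lamhat ΦT ΦP dT dP fb
  have hderiv : ∀ ℓ : Fin mP,
      HasDerivAt (fun t : ℝ => ΦT (Function.update fb ℓ t)) (dT fb ℓ) (fb ℓ) ∧
      HasDerivAt (fun t : ℝ => ΦP (Function.update fb ℓ t)) (dP fb ℓ) (fb ℓ) := by
    intro ℓ
    have hf : HasDerivAt (fun t => fhat (Function.update fb ℓ t)) (Shat *ᵥ Pi.single ℓ 1) (fb ℓ) :=
      (hasDerivAt_update fb ℓ (fb ℓ)).const_mulVec Shat
    have hx : HasDerivAt (fun t => xhat (Function.update fb ℓ t))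
        (-ρ • (Bul * diagonal Qhat * Shat) *ᵥ Pi.single ℓ 1) (fb ℓ) := by
      refine ((((hf.const_mulVec (diagonal Qhat)).const_smul ρ).const_add bhat).add_const
        (ρ • muhat) |>.const_mulVec Bul |>.neg |>.add_const _).congr_deriv ?_
      simp only [mulVec_smul, mulVec_mulVec, neg_smul, Matrix.mul_assoc]
    have hupdate : Function.update fb ℓ (fb ℓ) = fb := Function.update_eq_self ℓ fb
    constructor
    · refine (hx.dotProduct_mulVec_self_add_dotProduct habar bhat).congr_deriv ?_
      simp only [hupdate, dT, dotProduct_smul, smul_eq_mul, neg_mul]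
    · refine ((hx.const_smul ρ).add hf |>.sum_half_mul_sq_add_mul Qhat muhat).congr_deriv ?_
      simp only [Pi.add_apply, Pi.smul_apply, hupdate, dP, lamhat]
      congr 1
      simp only [Matrix.sub_mul, Matrix.one_mul, Matrix.smul_mul, sub_mulVec, smul_mulVec]
      module
  exact ⟨hderiv, exists_congr fun ℓ => (hderiv ℓ).1.exists_pos_iff,
    exists_congr fun ℓ => (hderiv ℓ).2.exists_pos_iff⟩

/-- Aggregated coupled system: partial derivatives of the transportation and power social
costs with respect to the line capacities `f̄_ℓ`:
`∂Φ_T/∂f̄_ℓ = −ρ (2ᾱx̂ + β̂)ᵀ B̂_ul⁻¹ diag(Q̂) Ŝ e_ℓ` and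
`∂Φ_P/∂f̄_ℓ = λ̂ᵀ (I − ρ² B̂_ul⁻¹ diag(Q̂)) Ŝ e_ℓ`; a type P-T (resp. P-P) Braess'
paradox occurs iff the first (resp. second) expression is strictly positive for some ℓ. -/
theorem PBP_capacity_derivatives {K mP : ℕ} (hK : 1 ≤ K)
    (abar : Matrix (Fin K) (Fin K) ℝ) (habar : abarᵀ = abar)
    (Qhat : Fin K → ℝ) (hQ : ∀ k, 0 < Qhat k)
    (ρ : ℝ) (hρ : 0 < ρ)
    (muhat bhat : Fin K → ℝ) (Shat : Matrix (Fin K) (Fin mP) ℝ)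
    (hΓ : IsUnit (abar + ρ ^ 2 • Matrix.diagonal Qhat))
    (hD : (1 : Fin K → ℝ) ⬝ᵥ (abar + ρ ^ 2 • Matrix.diagonal Qhat)⁻¹.mulVec 1 ≠ 0) :
    let Γ : Matrix (Fin K) (Fin K) ℝ := abar + ρ ^ 2 • Matrix.diagonal Qhat
    let D : ℝ := (1 : Fin K → ℝ) ⬝ᵥ Γ⁻¹.mulVec 1
    let onesKK : Matrix (Fin K) (Fin K) ℝ := Matrix.of fun _ _ => (1 : ℝ)
    let Bul : Matrix (Fin K) (Fin K) ℝ := Γ⁻¹ - D⁻¹ • (Γ⁻¹ * onesKK * Γ⁻¹)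
    let fhat : (Fin mP → ℝ) → Fin K → ℝ := fun fb => Shat.mulVec fb
    let xhat : (Fin mP → ℝ) → Fin K → ℝ := fun fb =>
      -(Bul.mulVec (bhat + ρ • (Matrix.diagonal Qhat).mulVec (fhat fb) + ρ • muhat)) +
        D⁻¹ • Γ⁻¹.mulVec 1
    let lamhat : (Fin mP → ℝ) → Fin K → ℝ := fun fb =>
      (Matrix.diagonal Qhat).mulVec (ρ • xhat fb + fhat fb) + muhat
    let ΦT : (Fin mP → ℝ) → ℝ := fun fb =>
      xhat fb ⬝ᵥ abar.mulVec (xhat fb) + bhat ⬝ᵥ xhat fb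
    let ΦP : (Fin mP → ℝ) → ℝ := fun fb =>
      ∑ k, ((1 / 2) * Qhat k * (ρ * xhat fb k + fhat fb k) ^ 2 +
        muhat k * (ρ * xhat fb k + fhat fb k))
    let dT : (Fin mP → ℝ) → Fin mP → ℝ := fun fb ℓ =>
      -(ρ * (((2 : ℝ) • abar.mulVec (xhat fb) + bhat) ⬝ᵥ
        (Bul * Matrix.diagonal Qhat * Shat).mulVec (Pi.single ℓ 1)))
    let dP : (Fin mP → ℝ) → Fin mP → ℝ := fun fb ℓ =>
      lamhat fb ⬝ᵥ
        (((1 : Matrix (Fin K) (Fin K) ℝ) - ρ ^ 2 • (Bul * Matrix.diagonal Qhat)) *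
          Shat).mulVec (Pi.single ℓ 1)
    ∀ fb : Fin mP → ℝ,
      (∀ ℓ : Fin mP,
        HasDerivAt (fun t : ℝ => ΦT (Function.update fb ℓ t)) (dT fb ℓ) (fb ℓ) ∧
        HasDerivAt (fun t : ℝ => ΦP (Function.update fb ℓ t)) (dP fb ℓ) (fb ℓ)) ∧
      ((∃ (ℓ : Fin mP) (Dv : ℝ),
          HasDerivAt (fun t : ℝ => ΦT (Function.update fb ℓ t)) Dv (fb ℓ) ∧ 0 < Dv) ↔
        ∃ ℓ : Fin mP, 0 < dT fb ℓ) ∧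
      ((∃ (ℓ : Fin mP) (Dv : ℝ),
          HasDerivAt (fun t : ℝ => ΦP (Function.update fb ℓ t)) Dv (fb ℓ) ∧ 0 < Dv) ↔
        ∃ ℓ : Fin mP, 0 < dP fb ℓ) :=
  PBP_capacity_derivatives_general abar habar Qhat ρ muhat bhat Shat
end
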